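/- arXiv:dg-ga/9702015 — 4 statements merged into one kernel-verified Lean document; each statement's English description precedes it below -/
import Mathlib

section
/- Let U : ℂ → ℝ be smooth and let (Ψ₁, Ψ₂) : ℂ → ℂ × ℂ be smooth functions satisfying the Dirac equation ∂_z Ψ₁ = U·Ψ₂ and ∂_{z̄} Ψ₂ = -U·Ψ₁. Then the complex 1-form ω = conj(Ψ₁)²·dz - conj(Ψ₂)²·dz̄ is closed, i.e. ∂_{z̄}(conj(Ψ₁)²) + ∂_z(conj(Ψ₂)²) = 0. -/
open Complex

/-- Wirtinger derivative `∂_z f = (∂_x f - i ∂_y f)/2`. -/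
noncomputable def wdz (f : ℂ → ℂ) (z : ℂ) : ℂ :=
  (fderiv ℝ f z 1 - Complex.I * fderiv ℝ f z Complex.I) / 2

/-- Wirtinger derivative `∂_z̄ f = (∂_x f + i ∂_y f)/2`. -/
noncomputable def wdzbar (f : ℂ → ℂ) (z : ℂ) : ℂ :=
  (fderiv ℝ f z 1 + Complex.I * fderiv ℝ f z Complex.I) / 2

lemma key (Ψ : ℂ → ℂ) (h : ContDiff ℝ (⊤ : ℕ∞) Ψ) (z v : ℂ) :
    fderiv ℝ (fun w => (starRingEnd ℂ (Ψ w)) ^ 2) z v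
      = 2 * starRingEnd ℂ (Ψ z) * starRingEnd ℂ (fderiv ℝ Ψ z v) := by
  have hΨ : HasFDerivAt Ψ (fderiv ℝ Ψ z) z :=
    (h.differentiable (by simp) z).hasFDerivAt
  have hc : HasFDerivAt (fun w => starRingEnd ℂ (Ψ w))
      ((Complex.conjCLE : ℂ →L[ℝ] ℂ).comp (fderiv ℝ Ψ z)) z :=
    Complex.conjCLE.hasFDerivAt.comp z hΨ
  have hsq := hc.mul hc
  have heq : (fun w => (starRingEnd ℂ (Ψ w)) ^ 2)
      = fun w => starRingEnd ℂ (Ψ w) * starRingEnd ℂ (Ψ w) := by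
    funext w; ring
  rw [heq, HasFDerivAt.fderiv (f := fun w => starRingEnd ℂ (Ψ w) * starRingEnd ℂ (Ψ w)) hsq]
  simp [Complex.conjCLE]
  ring

/-- For solutions of the Dirac equation, the 1-form
`conj(Ψ₁)² dz - conj(Ψ₂)² dz̄` is closed. -/
theorem stmt0 (U : ℂ → ℝ) (Ψ₁ Ψ₂ : ℂ → ℂ)
    (hU : ContDiff ℝ (⊤ : ℕ∞) U) (h1 : ContDiff ℝ (⊤ : ℕ∞) Ψ₁) (h2 : ContDiff ℝ (⊤ : ℕ∞) Ψ₂)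
    (hd1 : ∀ z, wdz Ψ₁ z = (U z : ℂ) * Ψ₂ z)
    (hd2 : ∀ z, wdzbar Ψ₂ z = -(U z : ℂ) * Ψ₁ z) :
    ∀ z, wdzbar (fun w => (starRingEnd ℂ (Ψ₁ w)) ^ 2) z
      + wdz (fun w => (starRingEnd ℂ (Ψ₂ w)) ^ 2) z = 0 := by
  intro z
  have e1 := congrArg (starRingEnd ℂ) (hd1 z)
  have e2 := congrArg (starRingEnd ℂ) (hd2 z)
  simp only [wdz, wdzbar, map_div₀, map_sub, map_add, map_mul, map_neg,
    Complex.conj_I, Complex.conj_ofReal, map_ofNat] at e1 e2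
  simp only [wdz, wdzbar, key Ψ₁ h1 z, key Ψ₂ h2 z]
  linear_combination 2 * (starRingEnd ℂ (Ψ₁ z)) * e1
    + 2 * (starRingEnd ℂ (Ψ₂ z)) * e2
end

section
/- Let U : ℂ → ℝ be smooth and let (Ψ₁, Ψ₂) satisfy the Dirac equation ∂_z Ψ₁ = U·Ψ₂ and ∂_{z̄} Ψ₂ = -U·Ψ₁. Then the 1-form Ψ₂·conj(Ψ₁)·dz + Ψ₁·conj(Ψ₂)·dz̄ is closed and has real values when evaluated on real tangent vectors paired with its conjugate structure; in particular ∂_{z̄}(Ψ₂·conj(Ψ₁)) = ∂_z(Ψ₁·conj(Ψ₂)). -/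
open Complex

lemma fderiv_mul_conj (f g : ℂ → ℂ) (z v : ℂ)
    (hf : DifferentiableAt ℝ f z) (hg : DifferentiableAt ℝ g z) :
    fderiv ℝ (fun w => f w * starRingEnd ℂ (g w)) z v
      = fderiv ℝ f z v * starRingEnd ℂ (g z)
        + f z * starRingEnd ℂ (fderiv ℝ g z v) := by
  have hg' : DifferentiableAt ℝ (fun w => starRingEnd ℂ (g w)) z :=
    Complex.conjCLE.differentiable.differentiableAt.comp z hg
  have hc : fderiv ℝ (fun w => starRingEnd ℂ (g w)) z v
      = starRingEnd ℂ (fderiv ℝ g z v) := by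
    have := Complex.conjCLE.comp_fderiv (f := g) (x := z)
    calc fderiv ℝ (fun w => starRingEnd ℂ (g w)) z v
        = fderiv ℝ (⇑Complex.conjCLE ∘ g) z v := rfl
      _ = (Complex.conjCLE : ℂ →L[ℝ] ℂ).comp (fderiv ℝ g z) v := by rw [this]
      _ = starRingEnd ℂ (fderiv ℝ g z v) := rfl
  rw [fderiv_fun_mul hf hg']
  simp [hc]
  ring

lemma key_s1 (f g : ℂ → ℂ) (z : ℂ)
    (hf : DifferentiableAt ℝ f z) (hg : DifferentiableAt ℝ g z) :
    wdzbar (fun w => f w * starRingEnd ℂ (g w)) z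
      = wdzbar f z * starRingEnd ℂ (g z) + f z * starRingEnd ℂ (wdz g z) := by
  unfold wdzbar wdz
  rw [fderiv_mul_conj f g z 1 hf hg, fderiv_mul_conj f g z Complex.I hf hg]
  simp only [map_div₀, map_sub, map_mul, Complex.conj_I, map_ofNat]
  ring

lemma key' (f g : ℂ → ℂ) (z : ℂ)
    (hf : DifferentiableAt ℝ f z) (hg : DifferentiableAt ℝ g z) :
    wdz (fun w => f w * starRingEnd ℂ (g w)) z
      = wdz f z * starRingEnd ℂ (g z) + f z * starRingEnd ℂ (wdzbar g z) := by
  unfold wdzbar wdz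
  rw [fderiv_mul_conj f g z 1 hf hg, fderiv_mul_conj f g z Complex.I hf hg]
  simp only [map_div₀, map_add, map_mul, Complex.conj_I, map_ofNat]
  ring

/-- For solutions of the Dirac equation, the 1-form
`Ψ₂ conj(Ψ₁) dz + Ψ₁ conj(Ψ₂) dz̄` is closed. -/
theorem stmt1 (U : ℂ → ℝ) (Ψ₁ Ψ₂ : ℂ → ℂ)
    (hU : ContDiff ℝ (⊤ : ℕ∞) U) (h1 : ContDiff ℝ (⊤ : ℕ∞) Ψ₁) (h2 : ContDiff ℝ (⊤ : ℕ∞) Ψ₂)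
    (hd1 : ∀ z, wdz Ψ₁ z = (U z : ℂ) * Ψ₂ z)
    (hd2 : ∀ z, wdzbar Ψ₂ z = -(U z : ℂ) * Ψ₁ z) :
    ∀ z, wdzbar (fun w => Ψ₂ w * starRingEnd ℂ (Ψ₁ w)) z
      = wdz (fun w => Ψ₁ w * starRingEnd ℂ (Ψ₂ w)) z := by
  intro z
  have d1 := (h1.differentiable (by simp)).differentiableAt (x := z)
  have d2 := (h2.differentiable (by simp)).differentiableAt (x := z)
  rw [key_s1 Ψ₂ Ψ₁ z d2 d1, key' Ψ₁ Ψ₂ z d1 d2, hd1, hd2]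
  simp only [map_mul, map_neg, Complex.conj_ofReal]
  ring
end

section
/- Let τ ∈ ℂ with Im τ ≠ 0. A pair (λ₁, λ₂) ∈ ℂ² satisfies e^{λ₁ - λ₂} = 1 and e^{λ₁ τ̄ - λ₂ τ} = 1 if and only if there exist integers m, n with λ₁ = (π m Re τ - π n)/Im τ + iπ m and λ₂ = conj(λ₁). -/
open Complex

/-- Characterization of resonant pairs of the zero-potential Bloch variety. -/
theorem stmt6 (τ : ℂ) (hτ : τ.im ≠ 0) (l₁ l₂ : ℂ) :
    (Complex.exp (l₁ - l₂) = 1 ∧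
      Complex.exp (l₁ * starRingEnd ℂ τ - l₂ * τ) = 1) ↔
    ∃ m n : ℤ,
      l₁ = (((Real.pi * m * τ.re - Real.pi * n) / τ.im : ℝ) : ℂ)
            + (Real.pi * m : ℝ) * Complex.I ∧
      l₂ = starRingEnd ℂ l₁ := by
  rw [Complex.exp_eq_one_iff, Complex.exp_eq_one_iff]
  constructor
  · rintro ⟨⟨k, hk⟩, ⟨j, hj⟩⟩
    rw [Complex.ext_iff] at hk hj
    simp [Complex.mul_re, Complex.mul_im] at hk hj
    obtain ⟨hk1, hk2⟩ := hk
    obtain ⟨hj1, hj2⟩ := hj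
    have hac : l₁.re = l₂.re := by linarith
    have hbd : l₁.im + l₂.im = 0 := by
      have h : (l₁.im + l₂.im) * τ.im = 0 := by
        rw [← hac] at hj1; linear_combination hj1
      exact (mul_eq_zero.mp h).resolve_right hτ
    have hb : l₁.im = Real.pi * (k : ℝ) := by linarith
    have hd : l₂.im = -(Real.pi * (k : ℝ)) := by linarith
    have ha : l₁.re * τ.im = Real.pi * (k : ℝ) * τ.re - Real.pi * (j : ℝ) := by
      rw [← hac, hb, hd] at hj2; linarith
    refine ⟨k, j, ?_, ?_⟩
    · rw [Complex.ext_iff]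
      constructor
      · simp only [Complex.add_re, Complex.ofReal_re, Complex.mul_re,
          Complex.ofReal_im, Complex.I_re, Complex.I_im]
        push_cast
        field_simp
        linarith
      · simp [Complex.mul_im, hb]
    · rw [Complex.ext_iff]
      refine ⟨by simp [hac.symm], ?_⟩
      simp only [Complex.conj_im]
      linarith
  · rintro ⟨m, n, h1, h2⟩
    subst h1 h2
    constructor
    · exact ⟨m, by rw [Complex.ext_iff]; constructor <;>
        simp [Complex.mul_re, Complex.mul_im] <;> ring⟩
    · refine ⟨n, ?_⟩
      rw [Complex.ext_iff]
      constructor <;> simp [Complex.mul_re, Complex.mul_im] <;> field_simp <;> ring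
end

section
/- Let X : ℝ² → ℝ³ be a smooth map with components given by the Generalized Weierstrass integrands: ∂_z(X₁ - iX₂) = i Ψ₂², ∂_{z̄}(X₁ - iX₂) = -i Ψ₁², ∂_z X₃ = -Ψ₂·conj(Ψ₁), ∂_{z̄} X₃ = -Ψ₁·conj(Ψ₂), where (Ψ₁, Ψ₂) solves the Dirac equation. Set W = X₁ - iX₂. Then the infinitesimal spinor variation δΨ₁ = -X₃ Ψ₁ + i W conj(Ψ₂), δΨ₂ = -X₃ Ψ₂ - i W conj(Ψ₁) induces δ(∂_z X₃) := -(δΨ₂·conj Ψ₁ + Ψ₂·conj(δΨ₁)) = ∂_z(W·conj(W) - X₃²), i.e. the variation of X₃ integrates to W conj(W) - X₃² = X₁² + X₂² - X₃². -/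
open Complex ComplexConjugate

section Wirtinger

variable {f g : ℂ → ℂ} {z : ℂ}

lemma wdz_mul (hf : DifferentiableAt ℝ f z) (hg : DifferentiableAt ℝ g z) :
    wdz (fun w => f w * g w) z = wdz f z * g z + f z * wdz g z := by
  simp only [wdz, fderiv_fun_mul hf hg, add_apply, smul_apply, smul_eq_mul]
  ring

lemma wdz_sub (hf : DifferentiableAt ℝ f z) (hg : DifferentiableAt ℝ g z) :
    wdz (fun w => f w - g w) z = wdz f z - wdz g z := by
  simp only [wdz, fderiv_fun_sub hf hg, sub_apply]
  ring

lemma wdz_sq (hf : DifferentiableAt ℝ f z) :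
    wdz (fun w => f w ^ 2) z = 2 * f z * wdz f z := by
  simp only [sq, wdz_mul hf hf]
  ring

end Wirtinger

lemma sub_I_mul_mul_conj (x y : ℝ) :
    ((x : ℂ) - I * y) * conj ((x : ℂ) - I * y) = (x : ℂ) ^ 2 + (y : ℂ) ^ 2 := by
  simp only [map_sub, map_mul, conj_I, conj_ofReal]
  linear_combination (-(y : ℂ) ^ 2) * I_sq

theorem stmt13_general (Ψ₁ Ψ₂ W X₃ : ℂ → ℂ) (X₁ X₂ : ℂ → ℝ)
    (hWd : Differentiable ℝ W) (hXd : Differentiable ℝ X₃)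
    (hXreal : ∀ z, starRingEnd ℂ (X₃ z) = X₃ z)
    (hWdef : ∀ z, W z = (X₁ z : ℂ) - Complex.I * (X₂ z : ℂ))
    (hWz : ∀ z, wdz W z = Complex.I * (Ψ₂ z) ^ 2)
    (hWcz : ∀ z, wdz (fun w => starRingEnd ℂ (W w)) z
      = Complex.I * (starRingEnd ℂ (Ψ₁ z)) ^ 2)
    (hXz : ∀ z, wdz X₃ z = -(Ψ₂ z * starRingEnd ℂ (Ψ₁ z)))
    (δΨ₁ δΨ₂ : ℂ → ℂ)
    (hδ1 : ∀ z, δΨ₁ z = -(X₃ z) * Ψ₁ z + Complex.I * W z * starRingEnd ℂ (Ψ₂ z))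
    (hδ2 : ∀ z, δΨ₂ z = -(X₃ z) * Ψ₂ z - Complex.I * W z * starRingEnd ℂ (Ψ₁ z)) :
    (∀ z, -(δΨ₂ z * starRingEnd ℂ (Ψ₁ z) + Ψ₂ z * starRingEnd ℂ (δΨ₁ z))
        = wdz (fun w => W w * starRingEnd ℂ (W w) - (X₃ w) ^ 2) z) ∧
    (∀ z, W z * starRingEnd ℂ (W z) - (X₃ z) ^ 2
        = (X₁ z : ℂ) ^ 2 + (X₂ z : ℂ) ^ 2 - (X₃ z) ^ 2) := by
  refine ⟨fun z => ?_, fun z => by rw [hWdef, sub_I_mul_mul_conj]⟩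
  have hWc : DifferentiableAt ℝ (fun w => conj (W w)) z :=
    conjCLE.differentiableAt.comp z (hWd z)
  rw [wdz_sub ((hWd z).fun_mul hWc) ((hXd z).fun_pow 2), wdz_mul (hWd z) hWc, wdz_sq (hXd z),
    hWz, hWcz, hXz, hδ1, hδ2]
  simp only [map_add, map_mul, map_neg, conj_I, hXreal z, conj_conj]
  ring

/-- The spinor variation realizing the conformal inversion generator: the variation of
the `dz`-coefficient of `dX₃` is the total derivative of `W conj(W) - X₃² = X₁²+X₂²-X₃²`. -/
theorem stmt13 (U : ℂ → ℝ) (Ψ₁ Ψ₂ W X₃ : ℂ → ℂ) (X₁ X₂ : ℂ → ℝ)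
    (hΨ1 : Differentiable ℝ Ψ₁) (hΨ2 : Differentiable ℝ Ψ₂)
    (hWd : Differentiable ℝ W) (hXd : Differentiable ℝ X₃)
    (hXreal : ∀ z, starRingEnd ℂ (X₃ z) = X₃ z)
    (hWdef : ∀ z, W z = (X₁ z : ℂ) - Complex.I * (X₂ z : ℂ))
    (hd1 : ∀ z, wdz Ψ₁ z = (U z : ℂ) * Ψ₂ z)
    (hd2 : ∀ z, wdzbar Ψ₂ z = -(U z : ℂ) * Ψ₁ z)
    (hWz : ∀ z, wdz W z = Complex.I * (Ψ₂ z) ^ 2)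
    (hWzb : ∀ z, wdzbar W z = -Complex.I * (Ψ₁ z) ^ 2)
    (hWcz : ∀ z, wdz (fun w => starRingEnd ℂ (W w)) z
      = Complex.I * (starRingEnd ℂ (Ψ₁ z)) ^ 2)
    (hXz : ∀ z, wdz X₃ z = -(Ψ₂ z * starRingEnd ℂ (Ψ₁ z)))
    (hXzb : ∀ z, wdzbar X₃ z = -(Ψ₁ z * starRingEnd ℂ (Ψ₂ z)))
    (δΨ₁ δΨ₂ : ℂ → ℂ)
    (hδ1 : ∀ z, δΨ₁ z = -(X₃ z) * Ψ₁ z + Complex.I * W z * starRingEnd ℂ (Ψ₂ z))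
    (hδ2 : ∀ z, δΨ₂ z = -(X₃ z) * Ψ₂ z - Complex.I * W z * starRingEnd ℂ (Ψ₁ z)) :
    (∀ z, -(δΨ₂ z * starRingEnd ℂ (Ψ₁ z) + Ψ₂ z * starRingEnd ℂ (δΨ₁ z))
        = wdz (fun w => W w * starRingEnd ℂ (W w) - (X₃ w) ^ 2) z) ∧
    (∀ z, W z * starRingEnd ℂ (W z) - (X₃ z) ^ 2
        = (X₁ z : ℂ) ^ 2 + (X₂ z : ℂ) ^ 2 - (X₃ z) ^ 2) :=
  stmt13_general Ψ₁ Ψ₂ W X₃ X₁ X₂ hWd hXd hXreal hWdef hWz hWcz hXz δΨ₁ δΨ₂ hδ1 hδ2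
end
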